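/- Let β̄₀ + Σ_{j=1}^n β̄_j x_j + β′ y ≥ 0 and β̂₀ + Σ_{j=1}^n β̂_j x_j + β′ y ≥ 0 be two valid core inequalities for conv(G) with the same β′. Suppose (1) β̄_p = β̄_q whenever p < q and β̂_p = β̂_q, and (2) the set {k ∈ {0,…,n} : L_k(β̂₀,β̂) + β′·m(x^k) = 0} is a strict subset of {k ∈ {0,…,n} : L_k(β̄₀,β̄) + β′·m(x^k) = 0}. Then the inequality β̂₀ + Σ_{j=1}^n β̂_j x_j + β′ y ≥ 0 is not facet-defining for conv(G). -/

import Mathlib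

open Finset

/-- The symmetric multilinear polynomial `m(x) = ∑_{i=2}^n c_i ∑_{|J|=i} ∏_{j∈J} x_j`. -/
noncomputable def mPoly (n : ℕ) (c : ℕ → ℝ) (x : Fin n → ℝ) : ℝ :=
  ∑ i ∈ Finset.Icc 2 n, c i *
    ∑ J ∈ Finset.powersetCard i (Finset.univ : Finset (Fin n)), ∏ j ∈ J, x j

/-- The box `X = [ℓ,u]^n`. -/
def Xbox (n : ℕ) (ℓ u : ℝ) : Set (Fin n → ℝ) :=
  {x | ∀ j, x j ∈ Set.Icc ℓ u}

/-- The graph `G = {(x,y) : x ∈ X, y = m(x)}`. -/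
def Gset (n : ℕ) (ℓ u : ℝ) (c : ℕ → ℝ) : Set ((Fin n → ℝ) × ℝ) :=
  {p | p.1 ∈ Xbox n ℓ u ∧ p.2 = mPoly n c p.1}

/-- The point `x^k` whose first `k` coordinates are `u` and remaining ones are `ℓ`. -/
def xpt (n : ℕ) (ℓ u : ℝ) (k : ℕ) : Fin n → ℝ :=
  fun j => if (j : ℕ) < k then u else ℓ

/-- `m(x^k)`. -/
noncomputable def mval (n : ℕ) (ℓ u : ℝ) (c : ℕ → ℝ) (k : ℕ) : ℝ :=
  mPoly n c (xpt n ℓ u k)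

/-- `L_k(β₀,β) = β₀ + u ∑_{j=1}^k β_j + ℓ ∑_{j=k+1}^n β_j`. -/
noncomputable def Lk (n : ℕ) (ℓ u : ℝ) (β₀ : ℝ) (β : Fin n → ℝ) (k : ℕ) : ℝ :=
  β₀ + u * ∑ j ∈ Finset.univ.filter (fun j : Fin n => (j : ℕ) < k), β j
     + ℓ * ∑ j ∈ Finset.univ.filter (fun j : Fin n => k ≤ (j : ℕ)), β j

/-- The left-hand side `β₀ + ∑_j β_j x_j + β′ y` of an inequality, at the point `p = (x,y)`. -/
noncomputable def ineqLhs (n : ℕ) (β₀ : ℝ) (β : Fin n → ℝ) (β' : ℝ)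
    (p : (Fin n → ℝ) × ℝ) : ℝ :=
  β₀ + ∑ j, β j * p.1 j + β' * p.2

/-- A core inequality: `β′ ∈ {1,-1}` and nondecreasing coefficients `β₁ ≤ … ≤ βₙ`. -/
def IsCore (n : ℕ) (β : Fin n → ℝ) (β' : ℝ) : Prop :=
  (β' = 1 ∨ β' = -1) ∧ Monotone β

/-- Validity of the inequality `β₀ + ∑_j β_j x_j + β′ y ≥ 0` on `conv(G)`. -/
def IsValid (n : ℕ) (ℓ u : ℝ) (c : ℕ → ℝ) (β₀ : ℝ) (β : Fin n → ℝ) (β' : ℝ) : Prop :=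
  ∀ p ∈ convexHull ℝ (Gset n ℓ u c), 0 ≤ ineqLhs n β₀ β β' p

/-- The point `p` satisfies the inequality exactly (with equality). -/
def ExactAt (n : ℕ) (β₀ : ℝ) (β : Fin n → ℝ) (β' : ℝ) (p : (Fin n → ℝ) × ℝ) : Prop :=
  ineqLhs n β₀ β β' p = 0

/-- Facet-defining: there are `n+1` affinely independent points of `conv(G)`
satisfying the inequality exactly. -/
def IsFacet (n : ℕ) (ℓ u : ℝ) (c : ℕ → ℝ) (β₀ : ℝ) (β : Fin n → ℝ) (β' : ℝ) : Prop :=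
  ∃ pts : Fin (n + 1) → (Fin n → ℝ) × ℝ,
    AffineIndependent ℝ pts ∧
    ∀ i, pts i ∈ convexHull ℝ (Gset n ℓ u c) ∧ ExactAt n β₀ β β' (pts i)

/-- The point `(x^k, m(x^k))` of `G`. -/
noncomputable def vtx (n : ℕ) (ℓ u : ℝ) (c : ℕ → ℝ) (k : ℕ) : (Fin n → ℝ) × ℝ :=
  (xpt n ℓ u k, mval n ℓ u c k)

/-!
If `β̂` were facet-defining, with tight affinely independent points `p₀, …, pₙ ∈ conv(G)`, then
`β̄` would be tight at the same points, and two affine functionals with the same nonzero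
`y`-coefficient `β′` vanishing on `n + 1` affinely independent points coincide, so the two sets
in (2) would be equal.

Tightness passes from `β̂` to `β̄` on all of `conv(G)`: since `m` is multilinear, `conv(G)` is the
convex hull of the `2ⁿ` points `(v, m(v))` over the vertices `v` of the box, and a valid
inequality tight at a convex combination is tight at each point carrying positive weight. At a
vertex with `k` coordinates equal to `u`, the symmetry of `m` and the monotonicity of `β̂` split
the slack of `β̂` into its slack at `x^k` plus a nonnegative sum of differences `β̂_{σ(i)} - β̂_i`;
(2) and (1) transfer the vanishing of each part to `β̄`.
-/

open Module

theorem AffineMap.apply_eq_zero_of_mem_convexHull {𝕜 E : Type*} [Field 𝕜] [LinearOrder 𝕜]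
    [IsStrictOrderedRing 𝕜] [AddCommGroup E] [Module 𝕜 E] {s : Set E} {f g : E →ᵃ[𝕜] 𝕜}
    (hf : ∀ x ∈ s, 0 ≤ f x) (hfg : ∀ x ∈ s, f x = 0 → g x = 0) {x : E}
    (hx : x ∈ convexHull 𝕜 s) (hfx : f x = 0) : g x = 0 := by
  suffices convexHull 𝕜 s ⊆ {x | 0 ≤ f x ∧ (f x = 0 → g x = 0)} from (this hx).2 hfx
  refine convexHull_min (fun x hx => ⟨hf x hx, hfg x hx⟩) ?_
  rintro x ⟨hfx, hgx⟩ y ⟨hfy, hgy⟩ a b ha hb hab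
  simp only [Set.mem_ofPred_eq, Convex.combo_affine_apply hab, smul_eq_mul]
  refine ⟨by positivity, fun h => ?_⟩
  obtain ⟨hax, hby⟩ := (add_eq_zero_iff_of_nonneg (by positivity) (by positivity)).1 h
  rcases mul_eq_zero.1 hax with ha0 | hx0 <;> rcases mul_eq_zero.1 hby with hb0 | hy0 <;>
    simp [*]

theorem LinearMap.eq_zero_of_hyperplane_le_ker {K V : Type*} [Field K] [AddCommGroup V]
    [Module K V] [FiniteDimensional K V] {W : Submodule K V}
    (hW : finrank K W + 1 = finrank K V)
    {φ ψ : V →ₗ[K] K} (hφ : W ≤ LinearMap.ker φ) (hψ : W ≤ LinearMap.ker ψ) {e : V}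
    (hφe : φ e ≠ 0) (hψe : ψ e = 0) : ψ = 0 := by
  have hker : W = LinearMap.ker φ := by
    refine Submodule.eq_of_le_of_finrank_eq hφ (le_antisymm (Submodule.finrank_mono hφ) ?_)
    have := Submodule.finrank_lt (s := LinearMap.ker φ) fun h =>
      hφe (LinearMap.mem_ker.1 (h ▸ Submodule.mem_top))
    omega
  ext x
  have hmem : x - (φ x / φ e) • e ∈ LinearMap.ker φ := by
    simp [LinearMap.mem_ker, hφe]
  have := hψ (hker ▸ hmem)
  simpa [hψe, sub_eq_zero] using this

theorem AffineMap.eq_of_affineIndependent {K V P : Type*} [Field K] [AddCommGroup V] [Module K V]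
    [FiniteDimensional K V] [AddTorsor V P] {d : ℕ} {p : Fin (d + 1) → P}
    (hp : AffineIndependent K p) (hd : finrank K V = d + 1) {f g : P →ᵃ[K] K}
    (hf : ∀ i, f (p i) = 0) (hg : ∀ i, g (p i) = 0) {e : V} (hfe : f.linear e ≠ 0)
    (hfg : f.linear e = g.linear e) : f = g := by
  have hker : ∀ h : P →ᵃ[K] K, (∀ i, h (p i) = 0) →
      vectorSpan K (Set.range p) ≤ LinearMap.ker h.linear := by
    intro h hh
    rw [LinearMap.le_ker_iff_map, AffineMap.map_vectorSpan, ← Set.range_comp]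
    simp [Function.comp_def, hh]
  have hlin : g.linear - f.linear = 0 :=
    LinearMap.eq_zero_of_hyperplane_le_ker
      (by rw [hp.finrank_vectorSpan (Fintype.card_fin _), hd]) (hker f hf)
      (hker (g - f) fun i => by simp [hf, hg]) hfe (by simp [hfg])
  refine AffineMap.ext_linear (sub_eq_zero.1 hlin).symm (p := p 0) ?_
  rw [hf, hg]

def boxVertex (n : ℕ) (ℓ u : ℝ) (S : Finset (Fin n)) : Fin n → ℝ :=
  fun j => if j ∈ S then u else ℓ

noncomputable def graphVertex (n : ℕ) (ℓ u : ℝ) (c : ℕ → ℝ) (S : Finset (Fin n)) :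
    (Fin n → ℝ) × ℝ :=
  (boxVertex n ℓ u S, mPoly n c (boxVertex n ℓ u S))

def initialSegment (n k : ℕ) : Finset (Fin n) :=
  univ.filter fun j => (j : ℕ) < k

lemma graphVertex_mem_Gset {n : ℕ} {ℓ u : ℝ} (hlu : ℓ < u) (c : ℕ → ℝ) (S : Finset (Fin n)) :
    graphVertex n ℓ u c S ∈ Gset n ℓ u c := by
  refine ⟨fun j => ?_, rfl⟩
  simp only [graphVertex, boxVertex]
  split_ifs <;> constructor <;> linarith

lemma mPoly_comp_perm (n : ℕ) (c : ℕ → ℝ) (x : Fin n → ℝ) (σ : Equiv.Perm (Fin n)) :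
    mPoly n c (x ∘ σ) = mPoly n c x := by
  simp only [mPoly, ← Finset.esymm_map_val, ← Multiset.map_map]
  rw [show univ.val.map σ = univ.val from congrArg Finset.val (Finset.map_univ_equiv σ)]

lemma mPoly_boxVertex_congr (n : ℕ) (ℓ u : ℝ) (c : ℕ → ℝ) {S T : Finset (Fin n)}
    (h : S.card = T.card) : mPoly n c (boxVertex n ℓ u S) = mPoly n c (boxVertex n ℓ u T) := by
  obtain ⟨σ, hσ⟩ := Equiv.Perm.exists_map_finset_eq S T h
  have : boxVertex n ℓ u T ∘ σ = boxVertex n ℓ u S := by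
    funext j
    simp [boxVertex, ← hσ]
  rw [← this, mPoly_comp_perm]

lemma card_initialSegment {n k : ℕ} (hk : k ≤ n) : (initialSegment n k).card = k := by
  simp [initialSegment, Fin.card_filter_val_lt, hk]

lemma xpt_eq_boxVertex (n : ℕ) (ℓ u : ℝ) (k : ℕ) :
    xpt n ℓ u k = boxVertex n ℓ u (initialSegment n k) := by
  funext j
  simp [xpt, boxVertex, initialSegment]

lemma vtx_eq_graphVertex (n : ℕ) (ℓ u : ℝ) (c : ℕ → ℝ) (k : ℕ) :
    vtx n ℓ u c k = graphVertex n ℓ u c (initialSegment n k) := by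
  simp [vtx, graphVertex, mval, xpt_eq_boxVertex]

lemma ineqLhs_vtx (n : ℕ) (ℓ u : ℝ) (c : ℕ → ℝ) (β₀ : ℝ) (β : Fin n → ℝ) (β' : ℝ) (k : ℕ) :
    ineqLhs n β₀ β β' (vtx n ℓ u c k) = Lk n ℓ u β₀ β k + β' * mval n ℓ u c k := by
  simp only [ineqLhs, vtx, Lk, xpt, mul_ite, Finset.sum_ite, not_lt, ← Finset.sum_mul]
  ring

lemma ineqLhs_graphVertex (n : ℕ) (ℓ u : ℝ) (c : ℕ → ℝ) (β₀ : ℝ) (β : Fin n → ℝ) (β' : ℝ)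
    (S : Finset (Fin n)) :
    ineqLhs n β₀ β β' (graphVertex n ℓ u c S) =
      β₀ + ℓ * ∑ j, β j + (u - ℓ) * ∑ j ∈ S, β j + β' * mPoly n c (boxVertex n ℓ u S) := by
  have hsplit : ∑ j, β j * boxVertex n ℓ u S j = ℓ * ∑ j, β j + (u - ℓ) * ∑ j ∈ S, β j := by
    simp only [boxVertex, mul_ite, Finset.sum_ite, Finset.filter_mem_eq_inter, univ_inter,
      ← Finset.sum_mul]
    rw [← Finset.sum_add_sum_compl S β, Finset.filter_not, Finset.filter_mem_eq_inter,
      univ_inter, compl_eq_univ_sdiff]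
    ring
  simp only [ineqLhs, graphVertex, hsplit]
  ring

lemma ineqLhs_graphVertex_sub {n : ℕ} (ℓ u : ℝ) (c : ℕ → ℝ) (β₀ : ℝ) (β : Fin n → ℝ) (β' : ℝ)
    {S T : Finset (Fin n)} (h : S.card = T.card) :
    ineqLhs n β₀ β β' (graphVertex n ℓ u c S) - ineqLhs n β₀ β β' (graphVertex n ℓ u c T) =
      (u - ℓ) * (∑ j ∈ S, β j - ∑ j ∈ T, β j) := by
  rw [ineqLhs_graphVertex, ineqLhs_graphVertex, mPoly_boxVertex_congr n ℓ u c h]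
  ring

lemma Fin.val_le_of_strictMono {k n : ℕ} {f : Fin k → Fin n} (hf : StrictMono f) (i : Fin k) :
    (i : ℕ) ≤ f i := by
  obtain ⟨i, hi⟩ := i
  induction i with
  | zero => exact Nat.zero_le _
  | succ m ih =>
    exact (ih (by omega)).trans_lt (hf (show (⟨m, by omega⟩ : Fin k) < ⟨m + 1, hi⟩ by simp))

lemma initialSegment_eq_map_castLEEmb {n k : ℕ} (hk : k ≤ n) :
    initialSegment n k = univ.map (Fin.castLEEmb hk) := by
  ext j
  simp only [initialSegment, mem_filter, mem_univ, true_and, mem_map, Fin.coe_castLEEmb]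
  exact ⟨fun hj => ⟨⟨j, hj⟩, rfl⟩, by rintro ⟨i, -, rfl⟩; exact i.2⟩

lemma sum_sub_sum_initialSegment {n : ℕ} (S : Finset (Fin n)) (hS : S.card ≤ n)
    (β : Fin n → ℝ) :
    ∑ j ∈ S, β j - ∑ j ∈ initialSegment n S.card, β j =
      ∑ i : Fin S.card, (β (S.orderEmbOfFin rfl i) - β (Fin.castLE hS i)) := by
  nth_rw 1 [← S.map_orderEmbOfFin_univ rfl]
  rw [initialSegment_eq_map_castLEEmb hS, Finset.sum_map, Finset.sum_map,
    ← Finset.sum_sub_distrib]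
  rfl

lemma ineqLhs_graphVertex_eq_vtx_add {n : ℕ} (ℓ u : ℝ) (c : ℕ → ℝ) (β₀ : ℝ) (β : Fin n → ℝ)
    (β' : ℝ) (S : Finset (Fin n)) (hS : S.card ≤ n) :
    ineqLhs n β₀ β β' (graphVertex n ℓ u c S) = ineqLhs n β₀ β β' (vtx n ℓ u c S.card) +
      (u - ℓ) * ∑ i : Fin S.card, (β (S.orderEmbOfFin rfl i) - β (Fin.castLE hS i)) := by
  rw [← sum_sub_sum_initialSegment S hS, vtx_eq_graphVertex,
    ← ineqLhs_graphVertex_sub ℓ u c β₀ β β' (card_initialSegment hS).symm]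
  ring

section VertexTransfer

variable {n : ℕ} {ℓ u : ℝ} {c : ℕ → ℝ} {βb₀ βh₀ β' : ℝ} {βb βh : Fin n → ℝ}

lemma ineqLhs_graphVertex_eq_zero_of_eq_zero (hlu : ℓ < u) (hmono : Monotone βh)
    (hvalid : ∀ T, 0 ≤ ineqLhs n βh₀ βh β' (graphVertex n ℓ u c T))
    (h1 : ∀ p q : Fin n, p < q → βh p = βh q → βb p = βb q)
    (hsub : ∀ k ≤ n, ineqLhs n βh₀ βh β' (vtx n ℓ u c k) = 0 →
      ineqLhs n βb₀ βb β' (vtx n ℓ u c k) = 0)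
    (S : Finset (Fin n)) (hS : ineqLhs n βh₀ βh β' (graphVertex n ℓ u c S) = 0) :
    ineqLhs n βb₀ βb β' (graphVertex n ℓ u c S) = 0 := by
  have hk : S.card ≤ n := S.card_le_univ.trans_eq (Fintype.card_fin n)
  set e := S.orderEmbOfFin rfl
  have hle : ∀ i, Fin.castLE hk i ≤ e i := fun i => Fin.val_le_of_strictMono e.strictMono i
  have hterm : ∀ i ∈ univ, 0 ≤ βh (e i) - βh (Fin.castLE hk i) :=
    fun i _ => sub_nonneg.2 (hmono (hle i))
  rw [ineqLhs_graphVertex_eq_vtx_add (hS := hk)] at hS ⊢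
  have hsum := Finset.sum_nonneg hterm
  have hvtx := vtx_eq_graphVertex n ℓ u c S.card ▸ hvalid (initialSegment n S.card)
  have hul : 0 < u - ℓ := sub_pos.2 hlu
  obtain ⟨hvtx0, hsum0⟩ : ineqLhs n βh₀ βh β' (vtx n ℓ u c S.card) = 0 ∧
      ∑ i, (βh (e i) - βh (Fin.castLE hk i)) = 0 := by
    constructor <;> nlinarith
  have hbar : ∀ i, βb (e i) - βb (Fin.castLE hk i) = 0 := by
    intro i
    have hi := (Finset.sum_eq_zero_iff_of_nonneg hterm).1 hsum0 i (mem_univ i)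
    rcases (hle i).eq_or_lt with heq | hlt
    · rw [heq, sub_self]
    · rw [h1 _ _ hlt (sub_eq_zero.1 hi).symm, sub_self]
  rw [hsub _ hk hvtx0, Finset.sum_eq_zero fun i _ => hbar i, mul_zero, add_zero]

end VertexTransfer

/-- The product of the barycentric coordinates of `x j` in `[ℓ, u]` selected by `S`: the weights
writing `x` as a convex combination of the vertices of the box, multilinearly in `x`. -/
noncomputable def boxWeight (n : ℕ) (ℓ u : ℝ) (x : Fin n → ℝ) (S : Finset (Fin n)) : ℝ :=
  ∏ j, if j ∈ S then (x j - ℓ) / (u - ℓ) else (u - x j) / (u - ℓ)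

lemma boxWeight_nonneg {n : ℕ} {ℓ u : ℝ} (hlu : ℓ < u) {x : Fin n → ℝ} (hx : x ∈ Xbox n ℓ u)
    (S : Finset (Fin n)) : 0 ≤ boxWeight n ℓ u x S := by
  refine Finset.prod_nonneg fun j _ => ?_
  have hul : 0 < u - ℓ := sub_pos.2 hlu
  obtain ⟨hℓ, hu⟩ := hx j
  split_ifs <;> exact div_nonneg (by linarith) hul.le

lemma sum_boxWeight_mul_prod {n : ℕ} (ℓ u : ℝ) (x : Fin n → ℝ) (F : Fin n → ℝ → ℝ) :
    ∑ S ∈ univ.powerset, boxWeight n ℓ u x S * ∏ j, F j (boxVertex n ℓ u S j) =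
      ∏ j, ((x j - ℓ) / (u - ℓ) * F j u + (u - x j) / (u - ℓ) * F j ℓ) := by
  rw [Finset.prod_add]
  refine Finset.sum_congr rfl fun S _ => ?_
  have hfactor : ∀ j, (if j ∈ S then (x j - ℓ) / (u - ℓ) else (u - x j) / (u - ℓ)) *
      F j (boxVertex n ℓ u S j) = S.piecewise (fun j => (x j - ℓ) / (u - ℓ) * F j u)
        (fun j => (u - x j) / (u - ℓ) * F j ℓ) j := by
    intro j
    by_cases hj : j ∈ S <;> simp [boxVertex, hj]
  rw [boxWeight, ← Finset.prod_mul_distrib, Finset.prod_congr rfl fun j _ => hfactor j,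
    Finset.prod_piecewise, univ_inter]

lemma sum_boxWeight_mul_prod_boxVertex {n : ℕ} {ℓ u : ℝ} (hlu : ℓ < u) (x : Fin n → ℝ)
    (J : Finset (Fin n)) :
    ∑ S ∈ univ.powerset, boxWeight n ℓ u x S * ∏ j ∈ J, boxVertex n ℓ u S j = ∏ j ∈ J, x j := by
  have hul : u - ℓ ≠ 0 := (sub_pos.2 hlu).ne'
  simp_rw [← Fintype.prod_ite_mem J]
  rw [sum_boxWeight_mul_prod ℓ u x fun j t => if j ∈ J then t else 1]
  refine Finset.prod_congr rfl fun j _ => ?_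
  split_ifs
  · field_simp
    ring
  · field_simp
    ring

lemma sum_boxWeight {n : ℕ} {ℓ u : ℝ} (hlu : ℓ < u) (x : Fin n → ℝ) :
    ∑ S ∈ univ.powerset, boxWeight n ℓ u x S = 1 := by
  simpa using sum_boxWeight_mul_prod_boxVertex hlu x ∅

lemma sum_boxWeight_smul_graphVertex {n : ℕ} {ℓ u : ℝ} (hlu : ℓ < u) (c : ℕ → ℝ)
    (x : Fin n → ℝ) :
    ∑ S ∈ univ.powerset, boxWeight n ℓ u x S • graphVertex n ℓ u c S = (x, mPoly n c x) := by
  refine Prod.ext (funext fun j => ?_) ?_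
  · simpa [graphVertex, Prod.fst_sum, Finset.sum_apply] using
      sum_boxWeight_mul_prod_boxVertex hlu x {j}
  · simp only [graphVertex, Prod.snd_sum, Prod.smul_snd, smul_eq_mul, mPoly, Finset.mul_sum]
    rw [Finset.sum_comm]
    refine Finset.sum_congr rfl fun i _ => ?_
    rw [Finset.sum_comm]
    simp_rw [mul_left_comm _ (c i), ← Finset.mul_sum, sum_boxWeight_mul_prod_boxVertex hlu]

lemma convexHull_Gset_subset {n : ℕ} {ℓ u : ℝ} (hlu : ℓ < u) (c : ℕ → ℝ) :
    convexHull ℝ (Gset n ℓ u c) ⊆ convexHull ℝ (Set.range (graphVertex n ℓ u c)) := by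
  refine convexHull_min ?_ (convex_convexHull ℝ _)
  rintro p ⟨hx, hp⟩
  rw [show p = (p.1, mPoly n c p.1) from Prod.ext rfl hp, ← sum_boxWeight_smul_graphVertex hlu c]
  exact (convex_convexHull ℝ _).sum_mem (fun S _ => boxWeight_nonneg hlu hx S)
    (sum_boxWeight hlu p.1) fun S _ => subset_convexHull ℝ _ (Set.mem_range_self S)

noncomputable def ineqAff (n : ℕ) (β₀ : ℝ) (β : Fin n → ℝ) (β' : ℝ) :
    ((Fin n → ℝ) × ℝ) →ᵃ[ℝ] ℝ where
  toFun := ineqLhs n β₀ β β'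
  linear := ∑ j, β j • (LinearMap.proj j ∘ₗ LinearMap.fst ℝ _ _) + β' • LinearMap.snd ℝ _ _
  map_vadd' p v := by
    simp [ineqLhs, LinearMap.sum_apply, mul_add, Finset.sum_add_distrib]
    ring

@[simp]
lemma ineqAff_apply (n : ℕ) (β₀ : ℝ) (β : Fin n → ℝ) (β' : ℝ) (p : (Fin n → ℝ) × ℝ) :
    ineqAff n β₀ β β' p = ineqLhs n β₀ β β' p := rfl

@[simp]
lemma ineqAff_linear_apply (n : ℕ) (β₀ : ℝ) (β : Fin n → ℝ) (β' : ℝ) (v : (Fin n → ℝ) × ℝ) :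
    (ineqAff n β₀ β β').linear v = ∑ j, β j * v.1 j + β' * v.2 := by
  simp [ineqAff]

theorem stmt8_general (n : ℕ) (ℓ u : ℝ) (hlu : ℓ < u) (c : ℕ → ℝ)
    (βb₀ : ℝ) (βb : Fin n → ℝ) (βh₀ : ℝ) (βh : Fin n → ℝ) (β' : ℝ)
    (hcoreh : IsCore n βh β') (hvalidh : IsValid n ℓ u c βh₀ βh β')
    (h1 : ∀ p q : Fin n, p < q → βh p = βh q → βb p = βb q)
    (h2 : {k : ℕ | k ≤ n ∧ Lk n ℓ u βh₀ βh k + β' * mval n ℓ u c k = 0} ⊂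
          {k : ℕ | k ≤ n ∧ Lk n ℓ u βb₀ βb k + β' * mval n ℓ u c k = 0}) :
    ¬ IsFacet n ℓ u c βh₀ βh β' := by
  rintro ⟨pts, haff, hpts⟩
  have hvalid : ∀ S, 0 ≤ ineqLhs n βh₀ βh β' (graphVertex n ℓ u c S) :=
    fun S => hvalidh _ (subset_convexHull ℝ _ (graphVertex_mem_Gset hlu c S))
  have hvert : ∀ S, ineqLhs n βh₀ βh β' (graphVertex n ℓ u c S) = 0 →
      ineqLhs n βb₀ βb β' (graphVertex n ℓ u c S) = 0 :=
    ineqLhs_graphVertex_eq_zero_of_eq_zero hlu hcoreh.2 hvalid h1 fun k hk hk0 => by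
      rw [ineqLhs_vtx] at hk0 ⊢
      exact (h2.subset ⟨hk, hk0⟩).2
  have hb : ∀ i, ineqAff n βb₀ βb β' (pts i) = 0 := fun i =>
    AffineMap.apply_eq_zero_of_mem_convexHull
      (f := ineqAff n βh₀ βh β') (g := ineqAff n βb₀ βb β')
      (Set.forall_mem_range.2 hvalid) (Set.forall_mem_range.2 hvert)
      (convexHull_Gset_subset hlu c (hpts i).1) (hpts i).2
  have hβ' : β' ≠ 0 := by rcases hcoreh.1 with h | h <;> simp [h]
  have heq : ineqAff n βh₀ βh β' = ineqAff n βb₀ βb β' :=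
    AffineMap.eq_of_affineIndependent haff (by simp) (fun i => (hpts i).2) hb
      (e := (0, 1)) (by simpa using hβ') (by simp)
  refine h2.ne (Set.ext fun k => ?_)
  simp only [Set.mem_ofPred_eq, ← ineqLhs_vtx, ← ineqAff_apply, heq]

/-- Given two valid core inequalities with the same `β′`, if
(1) `β̄_p = β̄_q` whenever `p < q` and `β̂_p = β̂_q`, and (2) the set of indices `k` where
the second holds exactly at `(x^k, m(x^k))` is a strict subset of that of the first,
then the second inequality is not facet-defining. -/
theorem stmt8 (n : ℕ) (hn : 2 ≤ n) (ℓ u : ℝ) (hlu : ℓ < u) (c : ℕ → ℝ)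
    (βb₀ : ℝ) (βb : Fin n → ℝ) (βh₀ : ℝ) (βh : Fin n → ℝ) (β' : ℝ)
    (hcoreb : IsCore n βb β') (hvalidb : IsValid n ℓ u c βb₀ βb β')
    (hcoreh : IsCore n βh β') (hvalidh : IsValid n ℓ u c βh₀ βh β')
    (h1 : ∀ p q : Fin n, p < q → βh p = βh q → βb p = βb q)
    (h2 : {k : ℕ | k ≤ n ∧ Lk n ℓ u βh₀ βh k + β' * mval n ℓ u c k = 0} ⊂
          {k : ℕ | k ≤ n ∧ Lk n ℓ u βb₀ βb k + β' * mval n ℓ u c k = 0}) :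
    ¬ IsFacet n ℓ u c βh₀ βh β' :=
  stmt8_general n ℓ u hlu c βb₀ βb βh₀ βh β' hcoreh hvalidh h1 h2
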